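/- Spherical shell covering by band-graph boundaries in ℤ^d (Lemma 5.1): Fix integers d ≥ 1 and W ≥ 1, and for ξ ∈ ℤ^d and real s ≥ 0 let B^d(ξ,s) = { x ∈ ℤ^d : ‖x−ξ‖₂ ≤ s } and ∂B^d(ξ,s) = { x ∈ ℤ^d : ‖x−ξ‖₂ > s and there exists y with ‖y−ξ‖₂ ≤ s and 0 < ‖x−y‖₂ ≤ W }. Set k* = ⌊2√d/W⌋, a_k = 1 − k·W/(2√d) for k = 0,…,k*−1, and a_{k*} = 0. Then there exists ρ₀ = ρ₀(d,W) > 0 such that for every real ρ ≥ ρ₀: if W < 2√d then B^d(ξ,ρ+1) ∖ B^d(ξ,ρ) ⊆ ⋃_{k=1}^{k*} ∂B^d(ξ, ρ+a_k), and if W ≥ 2√d then B^d(ξ,ρ+1) ∖ B^d(ξ,ρ) ⊆ ∂B^d(ξ,ρ). -/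

import Mathlib

/-!
Stepping from a lattice point `z ≠ 0` by one unit along a coordinate of largest modulus lowers
`‖z‖²` by `2 max |zᵢ| - 1 ≥ 2‖z‖/√d - 1`, hence lowers `‖z‖` by at least `1/√d - 1/(2‖z‖)`.
After `W` such steps from a point `x` of the shell we reach a lattice point within distance `W`
of `x` that is closer to `ξ` by almost `W/√d`.  By the choice of `k*`, consecutive radii `ρ + aₖ`
are less than `W/√d` apart, so once `ρ` is large some radius separates `x` from the point
reached; when `W ≥ 2√d` the gain exceeds `1`, so the point reached already lies in `B(ξ, ρ)`.
-/

open scoped BigOperators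

namespace BandShell

/-- Euclidean norm of a lattice vector in `ℤ^d`. -/
noncomputable def enorm {d : ℕ} (x : Fin d → ℤ) : ℝ :=
  Real.sqrt (∑ i, ((x i : ℝ)) ^ 2)

/-- Euclidean ball of radius `s` around `ξ` in `ℤ^d`. -/
def eball {d : ℕ} (ξ : Fin d → ℤ) (s : ℝ) : Set (Fin d → ℤ) :=
  {x | enorm (x - ξ) ≤ s}

/-- Exterior boundary of the Euclidean ball of radius `s` with respect to the band-graph
adjacency (`x ∼ y` iff `0 < ‖x-y‖₂ ≤ W`). -/
def ebdry {d : ℕ} (W : ℕ) (ξ : Fin d → ℤ) (s : ℝ) : Set (Fin d → ℤ) :=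
  {x | s < enorm (x - ξ) ∧
    ∃ y : Fin d → ℤ, enorm (y - ξ) ≤ s ∧ 0 < enorm (x - y) ∧ enorm (x - y) ≤ (W : ℝ)}

/-- `k* = ⌊2√d / W⌋`. -/
noncomputable def kstar (d W : ℕ) : ℕ := ⌊2 * Real.sqrt d / W⌋₊

/-- The radii increments `a_k`: `a_k = 1 - kW/(2√d)` for `k < k*`, and `a_{k*} = 0`. -/
noncomputable def aCoef (d W : ℕ) (k : ℕ) : ℝ :=
  if k = kstar d W then 0 else 1 - k * W / (2 * Real.sqrt d)

variable {d : ℕ}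

theorem enorm_eq_norm (x : Fin d → ℤ) :
    enorm x = ‖(WithLp.toLp 2 (fun i => (x i : ℝ)) : EuclideanSpace ℝ (Fin d))‖ := by
  simp [enorm, EuclideanSpace.norm_eq]

theorem enorm_sq (x : Fin d → ℤ) : enorm x ^ 2 = ∑ i, ((x i : ℝ)) ^ 2 :=
  Real.sq_sqrt (by positivity)

theorem enorm_nonneg (x : Fin d → ℤ) : 0 ≤ enorm x :=
  Real.sqrt_nonneg _

@[simp]
theorem enorm_zero : enorm (0 : Fin d → ℤ) = 0 := by
  simp [enorm]

theorem enorm_add_le (x y : Fin d → ℤ) : enorm (x + y) ≤ enorm x + enorm y := by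
  simp only [enorm_eq_norm]
  refine (norm_add_le _ _).trans_eq' (congrArg norm ?_)
  ext i
  simp

theorem enorm_pos {x : Fin d → ℤ} (hx : x ≠ 0) : 0 < enorm x := by
  obtain ⟨i, hi⟩ := Function.ne_iff.mp hx
  rw [enorm_eq_norm, norm_pos_iff]
  intro h
  exact hi (by simpa using congrFun (congrArg WithLp.ofLp h) i)

theorem enorm_le_sqrt_mul {x : Fin d → ℤ} {m : ℝ} (hm : 0 ≤ m) (hx : ∀ i, |(x i : ℝ)| ≤ m) :
    enorm x ≤ Real.sqrt d * m := by
  rw [← Real.sqrt_sq hm, ← Real.sqrt_mul (Nat.cast_nonneg d), enorm]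
  refine Real.sqrt_le_sqrt ?_
  calc ∑ i, ((x i : ℝ)) ^ 2 ≤ ∑ _i : Fin d, m ^ 2 :=
        Finset.sum_le_sum fun i _ => sq_le_sq' (abs_le.mp (hx i)).1 (abs_le.mp (hx i)).2
    _ = d * m ^ 2 := by simp

theorem exists_enorm_sub_sq_le {z : Fin d → ℤ} (hz : z ≠ 0) :
    ∃ e : Fin d → ℤ, enorm e ≤ 1 ∧
      enorm (z - e) ^ 2 ≤ enorm z ^ 2 - 2 * enorm z / Real.sqrt d + 1 := by
  obtain ⟨j, hj⟩ := Function.ne_iff.mp hz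
  have : Nonempty (Fin d) := ⟨j⟩
  obtain ⟨i, hi⟩ := Finite.exists_max fun k => |z k|
  have hzi : z i ≠ 0 := by
    intro h
    have := hi j
    rw [h, abs_zero] at this
    exact hj (abs_nonpos_iff.mp this)
  have hsign : ((z i).sign : ℝ) ^ 2 = 1 := by
    rw [← sq_abs, ← Int.cast_abs, Int.abs_sign_of_ne_zero hzi]
    norm_num
  have hsign_mul : ((z i).sign : ℝ) * z i = |(z i : ℝ)| := by
    exact_mod_cast Int.sign_mul_self_eq_abs (z i)
  refine ⟨Pi.single i (z i).sign, ?_, ?_⟩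
  · rw [enorm, Real.sqrt_le_one]
    simp [Pi.single_apply, hsign]
  · have hd : 0 < Real.sqrt d := Real.sqrt_pos.mpr (by exact_mod_cast Fin.pos j)
    have hmax : enorm z / Real.sqrt d ≤ |(z i : ℝ)| := by
      rw [div_le_iff₀ hd, mul_comm]
      exact enorm_le_sqrt_mul (abs_nonneg _) fun k => by exact_mod_cast hi k
    have hexpand :
        enorm (z - Pi.single i (z i).sign) ^ 2 = enorm z ^ 2 - 2 * |(z i : ℝ)| + 1 := by
      simp [enorm_sq, sub_sq, Finset.sum_add_distrib, Finset.sum_sub_distrib, Pi.single_apply,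
        hsign, ← hsign_mul]
      ring
    rw [hexpand, mul_div_assoc]
    linarith

theorem exists_enorm_sub_le {z : Fin d → ℤ} (hz : 1 ≤ enorm z) :
    ∃ e : Fin d → ℤ, enorm e ≤ 1 ∧
      enorm (z - e) ≤ enorm z - (1 / Real.sqrt d - 1 / (2 * enorm z)) := by
  have hz₀ : z ≠ 0 := by
    rintro rfl
    norm_num at hz
  obtain ⟨e, he, hsq⟩ := exists_enorm_sub_sq_le hz₀
  refine ⟨e, he, ?_⟩
  set r := enorm z
  set a := 1 / Real.sqrt d - 1 / (2 * r)
  have ha : a ≤ 1 := by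
    have : 1 / Real.sqrt d ≤ 1 := by
      rcases d.eq_zero_or_pos with rfl | hd
      · simp
      · exact div_le_one_of_le₀ (Real.one_le_sqrt.mpr (by exact_mod_cast hd)) (Real.sqrt_nonneg _)
    have : 0 ≤ 1 / (2 * r) := by positivity
    linarith
  have hexpand : (r - a) ^ 2 = r ^ 2 - 2 * r / Real.sqrt d + 1 + a ^ 2 := by
    simp only [a]
    field_simp
    ring
  rw [← pow_le_pow_iff_left₀ (enorm_nonneg _) (by linarith) two_ne_zero]
  nlinarith [sq_nonneg a]

theorem exists_enorm_sub_le_of_add_le {R : ℝ} (hR : 1 ≤ R) (n : ℕ) {z : Fin d → ℤ}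
    (hz : R + n ≤ enorm z) :
    ∃ w : Fin d → ℤ, enorm (z - w) ≤ n ∧
      enorm w ≤ enorm z - n * (1 / Real.sqrt d - 1 / (2 * R)) := by
  induction n generalizing z with
  | zero => exact ⟨z, by simp, by simp⟩
  | succ n ih =>
    push_cast at hz
    obtain ⟨e, he, hze⟩ := exists_enorm_sub_le (z := z) (by linarith)
    have hz_le : enorm z ≤ enorm (z - e) + enorm e := by
      simpa using enorm_add_le (z - e) e
    obtain ⟨w, hzw, hw⟩ := ih (z := z - e) (by linarith)
    refine ⟨w, ?_, ?_⟩
    · have := enorm_add_le e (z - e - w)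
      rw [show e + (z - e - w) = z - w by abel] at this
      push_cast
      linarith
    · have : 1 / (2 * enorm z) ≤ 1 / (2 * R) :=
        one_div_le_one_div_of_le (by positivity) (by linarith)
      push_cast
      linarith

theorem mem_ebdry_of_enorm_le {W : ℕ} {ξ x w : Fin d → ℤ} {s : ℝ} (hx : s < enorm (x - ξ))
    (hw : enorm w ≤ s) (hxw : enorm (x - ξ - w) ≤ W) : x ∈ ebdry W ξ s := by
  have hxw' : x - (w + ξ) = x - ξ - w := by abel
  refine ⟨hx, w + ξ, by simpa using hw, ?_, by rwa [hxw']⟩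
  rw [hxw']
  refine enorm_pos fun h => ?_
  rw [sub_eq_zero] at h
  rw [h] at hx
  linarith

theorem exists_mem_Ico_of_sub_succ_le {a : ℕ → ℝ} {K : ℕ} {t δ : ℝ} (hK : a K < t)
    (h₀ : t ≤ a 0) (hstep : ∀ k < K, a k - a (k + 1) ≤ δ) :
    ∃ k, 1 ≤ k ∧ k ≤ K ∧ a k ∈ Set.Ico (t - δ) t := by
  classical
  have hex : ∃ k, a k < t := ⟨K, hK⟩
  set k := Nat.find hex
  have hk : a k < t := Nat.find_spec hex
  have hkK : k ≤ K := Nat.find_min' hex hK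
  obtain ⟨j, hj⟩ : ∃ j, k = j + 1 := Nat.exists_eq_add_one.mpr <| Nat.pos_of_ne_zero fun h =>
    (h ▸ hk).not_ge h₀
  have hj_ge : t ≤ a j := not_lt.mp (Nat.find_min hex (by omega))
  refine ⟨k, by omega, hkK, ⟨?_, hk⟩⟩
  have := hstep j (by omega)
  rw [← hj] at this
  linarith

theorem exists_lt_forall_aCoef_sub_succ_le {W : ℕ} (hd : 1 ≤ d) (hW : 1 ≤ W) :
    ∃ η < W / Real.sqrt d, ∀ k < kstar d W, aCoef d W k - aCoef d W (k + 1) ≤ η := by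
  set s := Real.sqrt d
  set K := kstar d W
  have hs : 0 < s := Real.sqrt_pos.mpr (by exact_mod_cast hd)
  have hW₀ : (0 : ℝ) < W := by exact_mod_cast hW
  have hK : 2 * s < (K + 1) * W := (div_lt_iff₀ hW₀).mp (Nat.lt_floor_add_one _)
  refine ⟨max (W / (2 * s)) (1 - (K - 1) * W / (2 * s)), max_lt ?_ ?_, fun k hk => ?_⟩
  · exact div_lt_div_of_pos_left hW₀ hs (by linarith)
  · have hsplit : (K - 1) * W / (2 * s) + W / s = (K + 1) * W / (2 * s) := by
      field_simp
      ring
    have : 1 < (K + 1) * W / (2 * s) := (one_lt_div (by positivity)).mpr hK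
    linarith
  rw [aCoef, if_neg hk.ne]
  by_cases hlast : k + 1 = K
  · have hk_eq : (k : ℝ) = K - 1 := by rw [← hlast]; push_cast; ring
    rw [aCoef, if_pos hlast, hk_eq, sub_zero]
    exact le_max_right _ _
  · rw [aCoef, if_neg hlast]
    exact le_max_of_le_left (le_of_eq (by push_cast; ring))

/-- **Spherical shell covering by band-graph boundaries in `ℤ^d`** (Lemma 5.1).  There is
`ρ₀ = ρ₀(d,W) > 0` such that for every `ρ ≥ ρ₀` and every center `ξ`: if `W < 2√d`, the shell
`B^d(ξ,ρ+1) ∖ B^d(ξ,ρ)` is covered by the exterior boundaries `∂B^d(ξ,ρ+a_k)`, `1 ≤ k ≤ k*`;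
and if `W ≥ 2√d`, the shell is contained in `∂B^d(ξ,ρ)`. -/
theorem shell_covering (d W : ℕ) (hd : 1 ≤ d) (hW : 1 ≤ W) :
    ∃ ρ₀ : ℝ, 0 < ρ₀ ∧ ∀ ρ : ℝ, ρ₀ ≤ ρ → ∀ ξ : Fin d → ℤ,
      (((W : ℝ) < 2 * Real.sqrt d →
          ∀ x ∈ eball ξ (ρ + 1) \ eball ξ ρ,
            ∃ k : ℕ, 1 ≤ k ∧ k ≤ kstar d W ∧ x ∈ ebdry W ξ (ρ + aCoef d W k)) ∧
        (2 * Real.sqrt d ≤ (W : ℝ) →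
          eball ξ (ρ + 1) \ eball ξ ρ ⊆ ebdry W ξ ρ)) := by
  obtain ⟨η, hη, hstep⟩ := exists_lt_forall_aCoef_sub_succ_le hd hW
  set δ : ℝ → ℝ := fun R => W * (1 / Real.sqrt d - 1 / (2 * R))
  have hδ : Filter.Tendsto δ Filter.atTop (nhds (W / Real.sqrt d)) := by
    have := tendsto_const_nhds (x := (W : ℝ)).mul <|
      tendsto_const_nhds (x := 1 / Real.sqrt d).sub <|
      tendsto_const_nhds (x := (1 : ℝ)).div_atTop (Filter.tendsto_id.const_mul_atTop two_pos)
    rwa [sub_zero, mul_one_div] at this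
  obtain ⟨R, hR, hηR, hδR⟩ := ((Filter.eventually_ge_atTop 1).and <|
    (hδ.eventually (lt_mem_nhds hη)).and (hδ.eventually (lt_mem_nhds (sub_one_lt _)))).exists
  refine ⟨R + W, by positivity, fun ρ hρ ξ => ⟨fun hWd x hx => ?_, fun hWd x hx => ?_⟩⟩ <;>
    simp only [eball, Set.mem_sdiff, Set.mem_ofPred_eq, not_le] at hx <;>
    obtain ⟨w, hxw, hw⟩ := exists_enorm_sub_le_of_add_le hR W (z := x - ξ) (by linarith)
  · have hK : kstar d W ≠ 0 := by
      refine Nat.one_le_iff_ne_zero.mp (Nat.le_floor ?_)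
      rw [Nat.cast_one, one_le_div (by exact_mod_cast hW)]
      exact hWd.le
    obtain ⟨k, hk₁, hkK, hk_lo, hk_hi⟩ := exists_mem_Ico_of_sub_succ_le (a := aCoef d W)
      (t := enorm (x - ξ) - ρ) (δ := δ R) (by rw [aCoef, if_pos rfl]; linarith)
      (by rw [aCoef, if_neg hK.symm, Nat.cast_zero, zero_mul, zero_div, sub_zero]; linarith)
      fun k hk => (hstep k hk).trans hηR.le
    exact ⟨k, hk₁, hkK, mem_ebdry_of_enorm_le (by linarith) (by linarith) hxw⟩
  · have : 2 ≤ W / Real.sqrt d := by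
      rw [le_div_iff₀ (Real.sqrt_pos.mpr (by exact_mod_cast hd))]
      exact hWd
    exact mem_ebdry_of_enorm_le hx.2 (by linarith) hxw

end BandShell
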